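/- arXiv:2403.17871 — 3 statements merged into one kernel-verified Lean document; each statement's English description precedes it below -/
import Mathlib

section
/- Let Γ be a connected graph, and let Γ⁰, Γ′, Γ″ be nontrivial biconnected subgraphs with Γ′ ∩ Γ″ = ∅ and Γ⁰ the induced subgraph on V(Γ′) ∪ V(Γ″). Write e = val(Γ⁰), e′ = val(Γ′), e″ = val(Γ″), h = g(Γ⁰), h′ = g(Γ′), h″ = g(Γ″). Then 2(h + 1 − (h′ + h″)) = e′ + e″ − e, and the strict triangle inequalities e < e′ + e″, e′ < e″ + e, e″ < e′ + e hold. -/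
open Finset

/-- The edges of the multigraph `ends : E → V × V` joining `S` to its
complement. -/
def crossEdges {V E : Type} [Fintype E] [DecidableEq V]
    (ends : E → V × V) (S : Finset V) : Finset E :=
  univ.filter fun e =>
    ((ends e).1 ∈ S ∧ (ends e).2 ∉ S) ∨ ((ends e).1 ∉ S ∧ (ends e).2 ∈ S)

/-- The valence `val(S)` of a vertex subset: the number of edges joining `S`
to its complement. -/
def valS {V E : Type} [Fintype E] [DecidableEq V]
    (ends : E → V × V) (S : Finset V) : ℕ :=
  (crossEdges ends S).card

/-- The edges with both endpoints in `S`. -/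
def intEdges {V E : Type} [Fintype E] [DecidableEq V]
    (ends : E → V × V) (S : Finset V) : Finset E :=
  univ.filter fun e => (ends e).1 ∈ S ∧ (ends e).2 ∈ S

/-- The genus of the induced subgraph on `S` (for `S` connected):
`g(S) = |E(S)| - |S| + 1 + Σ_{v ∈ S} gen v`. -/
def genusS {V E : Type} [Fintype E] [DecidableEq V]
    (ends : E → V × V) (gen : V → ℤ) (S : Finset V) : ℤ :=
  ((intEdges ends S).card : ℤ) - (S.card : ℤ) + 1 + ∑ v ∈ S, gen v

/-- The valence of a single vertex (loops counted twice). -/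
def degV {V E : Type} [Fintype E] [DecidableEq V]
    (ends : E → V × V) (v : V) : ℕ :=
  ∑ e : E, ((if (ends e).1 = v then 1 else 0) + (if (ends e).2 = v then 1 else 0))

/-- `Conn ends S F`: any two vertices of `S` are joined by a walk inside `S`
using only edges from `F`. -/
def Conn {V E : Type} (ends : E → V × V) (S : Finset V) (F : Finset E) : Prop :=
  ∀ a ∈ S, ∀ b ∈ S, Relation.ReflTransGen
    (fun x y => x ∈ S ∧ y ∈ S ∧ ∃ e ∈ F, ends e = (x, y) ∨ ends e = (y, x)) a b

/-! Every edge leaving `Γ'` or `Γ''` ends in `Γ''`, `Γ'` or the complement `T` of `Γ⁰`, so with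
`x = val(Γ', Γ'')`, `y = val(Γ', T)`, `z = val(Γ'', T)` one has `e' = x + y`, `e'' = x + z`,
`e = y + z`, and `h = h' + h'' + x - 1` because the edges of `Γ⁰` are those of `Γ'`, of `Γ''`, and
the `x` edges between them. The identity is then linear arithmetic, and the strict triangle
inequalities say `x, y, z > 0`: each follows from connectedness of `Γ⁰ = Γ' ∪ Γ''`,
`Γ''ᶜ = Γ' ∪ T` and `Γ'ᶜ = Γ'' ∪ T` respectively. -/

section EdgeCounting

variable {V E : Type} [Fintype E] [DecidableEq V] (ends : E → V × V)

def edgesBetween (A B : Finset V) : Finset E :=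
  univ.filter fun e => ((ends e).1 ∈ A ∧ (ends e).2 ∈ B) ∨ ((ends e).1 ∈ B ∧ (ends e).2 ∈ A)

lemma edgesBetween_comm (A B : Finset V) : edgesBetween ends A B = edgesBetween ends B A := by
  simp only [edgesBetween, or_comm]

lemma crossEdges_eq_edgesBetween_compl [Fintype V] (S : Finset V) :
    crossEdges ends S = edgesBetween ends S Sᶜ := by
  simp only [crossEdges, edgesBetween, mem_compl]

lemma valS_compl [Fintype V] (S : Finset V) : valS ends Sᶜ = valS ends S := by
  rw [valS, valS, crossEdges_eq_edgesBetween_compl, crossEdges_eq_edgesBetween_compl, compl_compl,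
    edgesBetween_comm]

lemma card_edgesBetween_union {A B C : Finset V} (hAC : Disjoint A C) (hBC : Disjoint B C) :
    #(edgesBetween ends A (B ∪ C)) = #(edgesBetween ends A B) + #(edgesBetween ends A C) := by
  classical
  rw [← card_union_of_disjoint]
  · congr 1
    ext e
    simp only [edgesBetween, mem_filter, mem_union, mem_univ, true_and]
    tauto
  · simp only [disjoint_left, edgesBetween, mem_filter, mem_univ, true_and]
    rintro e (⟨h₁, h₂⟩ | ⟨h₁, h₂⟩) (⟨h₁', h₂'⟩ | ⟨h₁', h₂'⟩)
    exacts [disjoint_left.mp hBC h₂ h₂', disjoint_left.mp hAC h₁ h₁', disjoint_left.mp hAC h₂ h₂',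
      disjoint_left.mp hBC h₁ h₁']

lemma valS_eq_add_of_compl_eq_union [Fintype V] {A B C : Finset V} (hBC : Disjoint B C)
    (hA : Aᶜ = B ∪ C) :
    valS ends A = #(edgesBetween ends A B) + #(edgesBetween ends A C) := by
  have hC : Disjoint A C := disjoint_left.mpr fun v hvA hvC =>
    mem_compl.mp (hA ▸ mem_union_right B hvC) hvA
  rw [valS, crossEdges_eq_edgesBetween_compl, hA, card_edgesBetween_union ends hC hBC]

lemma card_intEdges_union {A B : Finset V} (hAB : Disjoint A B) :
    #(intEdges ends (A ∪ B)) =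
      #(intEdges ends A) + #(intEdges ends B) + #(edgesBetween ends A B) := by
  classical
  have hAB' := disjoint_left.mp hAB
  have hint : Disjoint (intEdges ends A) (intEdges ends B) := by
    simp only [disjoint_left, intEdges, mem_filter, mem_univ, true_and]
    exact fun e h h' => hAB' h.1 h'.1
  have hbetween : Disjoint (intEdges ends A ∪ intEdges ends B) (edgesBetween ends A B) := by
    simp only [disjoint_left, intEdges, edgesBetween, mem_union, mem_filter, mem_univ, true_and]
    rintro e (⟨h₁, h₂⟩ | ⟨h₁, h₂⟩) (⟨h₁', h₂'⟩ | ⟨h₁', h₂'⟩)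
    exacts [hAB' h₂ h₂', hAB' h₁ h₁', hAB' h₁' h₁, hAB' h₂' h₂]
  rw [← card_union_of_disjoint hint, ← card_union_of_disjoint hbetween]
  congr 1
  ext e
  simp only [intEdges, edgesBetween, mem_filter, mem_union, mem_univ, true_and]
  tauto

lemma genusS_union (gen : V → ℤ) {A B : Finset V} (hAB : Disjoint A B) :
    genusS ends gen (A ∪ B) =
      genusS ends gen A + genusS ends gen B + #(edgesBetween ends A B) - 1 := by
  simp only [genusS, card_intEdges_union ends hAB, card_union_of_disjoint hAB, sum_union hAB]
  push_cast
  ring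

end EdgeCounting

lemma Conn.exists_mem_edgesBetween {V E : Type} [Fintype E] [DecidableEq V] {ends : E → V × V}
    {A B : Finset V} {F : Finset E} (hc : Conn ends (A ∪ B) F) (hAB : Disjoint A B)
    (hA : A.Nonempty) (hB : B.Nonempty) : ∃ e ∈ F, e ∈ edgesBetween ends A B := by
  obtain ⟨a, ha⟩ := hA
  obtain ⟨b, hb⟩ := hB
  by_contra! hno
  have hstay : ∀ x y, y ∈ A ∪ B → (∃ e ∈ F, ends e = (x, y) ∨ ends e = (y, x)) →
      x ∈ A → y ∈ A := by
    rintro x y hy ⟨e, heF, he⟩ hx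
    refine (mem_union.mp hy).resolve_right fun hyB => hno e heF ?_
    simp only [edgesBetween, mem_filter, mem_univ, true_and]
    rcases he with he | he <;> simp [he, hx, hyB]
  have hreach : ∀ y, Relation.ReflTransGen (fun x y => x ∈ A ∪ B ∧ y ∈ A ∪ B ∧
      ∃ e ∈ F, ends e = (x, y) ∨ ends e = (y, x)) a y → y ∈ A := by
    intro y hy
    induction hy with
    | refl => exact ha
    | tail _ hstep ih => exact hstay _ _ hstep.2.1 hstep.2.2 ih
  exact disjoint_left.mp hAB (hreach b (hc a (mem_union_left B ha) b (mem_union_right A hb))) hb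

lemma Finset.compl_eq_union_compl_union {V : Type} [Fintype V] [DecidableEq V] {A B : Finset V}
    (hAB : Disjoint A B) : Aᶜ = B ∪ (A ∪ B)ᶜ := by
  ext v
  have : v ∈ B → v ∉ A := fun h => disjoint_right.mp hAB h
  simp only [mem_compl, mem_union]
  tauto

theorem triangle_relation_for_subgraphs_general
    {V E : Type} [Fintype V] [Fintype E] [DecidableEq V]
    (ends : E → V × V) (gen : V → ℤ)
    (S' S'' : Finset V) (hdisj : Disjoint S' S'')
    (hne' : S'.Nonempty) (hne'' : S''.Nonempty)
    (hnu0 : S' ∪ S'' ≠ univ)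
    (hc'c : Conn ends S'ᶜ (univ : Finset E))
    (hc''c : Conn ends S''ᶜ (univ : Finset E))
    (hc0 : Conn ends (S' ∪ S'') (univ : Finset E)) :
    2 * (genusS ends gen (S' ∪ S'') + 1 - (genusS ends gen S' + genusS ends gen S''))
        = (valS ends S' : ℤ) + (valS ends S'' : ℤ) - (valS ends (S' ∪ S'') : ℤ) ∧
    (valS ends (S' ∪ S'') : ℤ) < (valS ends S' : ℤ) + (valS ends S'' : ℤ) ∧
    (valS ends S' : ℤ) < (valS ends S'' : ℤ) + (valS ends (S' ∪ S'') : ℤ) ∧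
    (valS ends S'' : ℤ) < (valS ends S' : ℤ) + (valS ends (S' ∪ S'') : ℤ) := by
  set T := (S' ∪ S'')ᶜ with hT
  have hT' : Disjoint S' T := disjoint_compl_right.mono_left subset_union_left
  have hT'' : Disjoint S'' T := disjoint_compl_right.mono_left subset_union_right
  have hcompl' : S'ᶜ = S'' ∪ T := compl_eq_union_compl_union hdisj
  have hcompl'' : S''ᶜ = S' ∪ T := by
    rw [compl_eq_union_compl_union hdisj.symm, union_comm S'' S']
  have hval' := valS_eq_add_of_compl_eq_union ends hT'' hcompl'
  have hval'' := valS_eq_add_of_compl_eq_union ends hT' hcompl''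
  have hval0 : valS ends (S' ∪ S'') = #(edgesBetween ends S' T) + #(edgesBetween ends S'' T) := by
    rw [← valS_compl, valS_eq_add_of_compl_eq_union ends hdisj (compl_compl _),
      edgesBetween_comm ends T, edgesBetween_comm ends T]
  have hTne : T.Nonempty := (compl_ne_univ_iff_nonempty T).mp (by rwa [hT, compl_compl])
  have hx := card_pos.mpr ((hc0.exists_mem_edgesBetween hdisj hne' hne'').imp fun _ => And.right)
  have hy := card_pos.mpr
    (((hcompl'' ▸ hc''c).exists_mem_edgesBetween hT' hne' hTne).imp fun _ => And.right)
  have hz := card_pos.mpr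
    (((hcompl' ▸ hc'c).exists_mem_edgesBetween hT'' hne'' hTne).imp fun _ => And.right)
  rw [edgesBetween_comm ends S'' S'] at hval''
  rw [genusS_union ends gen hdisj, hval', hval'', hval0]
  push_cast
  omega

/-- for disjoint nontrivial biconnected subgraphs `S'`, `S''` of
a connected graph with `S⁰ = S' ∪ S''` nontrivial and biconnected, writing
`e = val(S⁰)`, `e' = val(S')`, `e'' = val(S'')`, `h = g(S⁰)`, `h' = g(S')`,
`h'' = g(S'')`, one has `2(h + 1 - (h' + h'')) = e' + e'' - e` and the strict
triangle inequalities. -/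
theorem triangle_relation_for_subgraphs
    {V E : Type} [Fintype V] [Fintype E] [DecidableEq V] [DecidableEq E]
    (ends : E → V × V) (gen : V → ℤ)
    (hconn : Conn ends (univ : Finset V) (univ : Finset E))
    (S' S'' : Finset V) (hdisj : Disjoint S' S'')
    (hne' : S'.Nonempty) (hne'' : S''.Nonempty)
    (hnu' : S' ≠ univ) (hnu'' : S'' ≠ univ) (hnu0 : S' ∪ S'' ≠ univ)
    (hc' : Conn ends S' (univ : Finset E))
    (hc'c : Conn ends S'ᶜ (univ : Finset E))
    (hc'' : Conn ends S'' (univ : Finset E))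
    (hc''c : Conn ends S''ᶜ (univ : Finset E))
    (hc0 : Conn ends (S' ∪ S'') (univ : Finset E))
    (hc0c : Conn ends (S' ∪ S'')ᶜ (univ : Finset E)) :
    2 * (genusS ends gen (S' ∪ S'') + 1 - (genusS ends gen S' + genusS ends gen S''))
        = (valS ends S' : ℤ) + (valS ends S'' : ℤ) - (valS ends (S' ∪ S'') : ℤ) ∧
    (valS ends (S' ∪ S'') : ℤ) < (valS ends S' : ℤ) + (valS ends S'' : ℤ) ∧
    (valS ends S' : ℤ) < (valS ends S'' : ℤ) + (valS ends (S' ∪ S'') : ℤ) ∧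
    (valS ends S'' : ℤ) < (valS ends S' : ℤ) + (valS ends (S' ∪ S'') : ℤ) :=
  triangle_relation_for_subgraphs_general ends gen S' S'' hdisj hne' hne'' hnu0 hc'c hc''c hc0
end

section
/- There is no real-valued function φ on singletons {1},…,{6} (extended additively to subsets of [6]) such that simultaneously ⌈(2 + φ_{123} − φ_{456})/2⌉ = 1, ⌈(2 + φ_{156} − φ_{234})/2⌉ = 1, ⌈(2 + φ_{345} − φ_{126})/2⌉ = 1, ⌈(2 + φ_{125} − φ_{346})/2⌉ = 2, ⌈(2 + φ_{134} − φ_{256})/2⌉ = 2, and ⌈(2 + φ_{356} − φ_{124})/2⌉ = 2, where φ_S = Σ_{i∈S} φ_{{i}}. -/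
/-! Each ceiling condition fixes the sign of the difference of the two triple sums. The three
differences in the first three conditions and the three in the last three both add up to the
alternating sum `φ₁ - φ₂ + φ₃ - φ₄ + φ₅ - φ₆`, which would then be both `≤ 0` and `> 0`. -/

section CeilHalf

variable {α : Type*} [Field α] [LinearOrder α] [IsStrictOrderedRing α] [FloorRing α]

theorem ceil_two_add_sub_div_two_le_one_iff {x y : α} : ⌈(2 + x - y) / 2⌉ ≤ 1 ↔ x ≤ y := by
  rw [Int.ceil_le, Int.cast_one, div_le_one two_pos, add_sub_assoc, add_le_iff_nonpos_right,
    sub_nonpos]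

theorem one_lt_ceil_two_add_sub_div_two_iff {x y : α} : 1 < ⌈(2 + x - y) / 2⌉ ↔ y < x := by
  rw [← not_le, ceil_two_add_sub_div_two_le_one_iff, not_le]

end CeilHalf

/-- `f i` is `φ_{{i+1}}`. -/
theorem ex26_no_classical_phi :
    ¬ ∃ f : Fin 6 → ℝ,
      ⌈(2 + (f 0 + f 1 + f 2) - (f 3 + f 4 + f 5)) / 2⌉ = 1 ∧
      ⌈(2 + (f 0 + f 4 + f 5) - (f 1 + f 2 + f 3)) / 2⌉ = 1 ∧
      ⌈(2 + (f 2 + f 3 + f 4) - (f 0 + f 1 + f 5)) / 2⌉ = 1 ∧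
      ⌈(2 + (f 0 + f 1 + f 4) - (f 2 + f 3 + f 5)) / 2⌉ = 2 ∧
      ⌈(2 + (f 0 + f 2 + f 3) - (f 1 + f 4 + f 5)) / 2⌉ = 2 ∧
      ⌈(2 + (f 2 + f 4 + f 5) - (f 0 + f 1 + f 3)) / 2⌉ = 2 := by
  rintro ⟨f, h₁, h₂, h₃, h₄, h₅, h₆⟩
  have one_lt_two_int : (1 : ℤ) < 2 := one_lt_two
  have alternating_nonpos : f 0 - f 1 + f 2 - f 3 + f 4 - f 5 ≤ 0 := by
    linarith [ceil_two_add_sub_div_two_le_one_iff.mp h₁.le,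
      ceil_two_add_sub_div_two_le_one_iff.mp h₂.le,
      ceil_two_add_sub_div_two_le_one_iff.mp h₃.le]
  have alternating_pos : 0 < f 0 - f 1 + f 2 - f 3 + f 4 - f 5 := by
    linarith [one_lt_ceil_two_add_sub_div_two_iff.mp (h₄ ▸ one_lt_two_int),
      one_lt_ceil_two_add_sub_div_two_iff.mp (h₅ ▸ one_lt_two_int),
      one_lt_ceil_two_add_sub_div_two_iff.mp (h₆ ▸ one_lt_two_int)]
  exact alternating_pos.not_ge alternating_nonpos
end

section
/- Let d, g be integers with g ≥ 2 and let m : D → ℤ be a function on triples (e,h,A) satisfying: (i) m(e,h,A) + m(e, g+1−e−h, Aᶜ) = d+1−e whenever both triples are in the domain, and (ii) 2m(3,0,∅) ≤ m(4,0,∅) ≤ 2m(3,0,∅) + 1 and the complementarity relation m(4,0,{1}) = d − 3 − m(4,0,∅) with m(2,0,{1}) + m(4,0,∅) ≤ m(4,0,{1}) ≤ m(2,0,{1}) + m(4,0,∅) + 1. Write A = m(2,0,{1}), B₀ = m(3,0,∅), C = m(4,0,∅). Then: if d − A ≡ 0 mod 4 then (C, B₀) = ((d−A−4)/2, (d−A−4)/4);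 if d − A ≡ 1 mod 4 then (C, B₀) = ((d−A−3)/2, (d−A−5)/4); if d − A ≡ 2 mod 4 then (C, B₀) = ((d−A−4)/2, (d−A−6)/4); if d − A ≡ 3 mod 4 then (C, B₀) = ((d−A−3)/2, (d−A−3)/4). -/
/-!
Substituting `m(4,0,{1}) = d - 3 - C` into the bounds on `m(4,0,{1})` squeezes `2C` between
`d - A - 4` and `d - A - 3`, so `C = ⌊(d - A - 3)/2⌋`; then `2B₀ ≤ C ≤ 2B₀ + 1` gives
`B₀ = ⌊C/2⌋ = ⌊(d - A - 3)/4⌋`. The four cases are these two floors read off by the residue mod 4.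
-/

/-- The stability domain `D_{g,n}` of vine-graph triples `(e,h,A)`. -/
def StabDom (g : ℤ) (n : ℕ) (e h : ℤ) (A : Finset (Fin n)) : Prop :=
  1 ≤ e ∧ e ≤ g + 1 ∧ 0 ≤ h ∧ h ≤ g + 1 - e ∧
    ¬(e = 2 ∧ h = 0 ∧ A = ∅) ∧ ¬(e = 2 ∧ h = g - 1 ∧ A = Finset.univ)

lemma eq_ediv_two_of_two_mul_le_of_le {b c : ℤ} (h₁ : 2 * b ≤ c) (h₂ : c ≤ 2 * b + 1) :
    b = c / 2 :=
  ((Int.ediv_eq_iff_of_pos two_pos).2 ⟨by omega, by omega⟩).symm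

lemma sub_three_ediv_two_ediv_two (n : ℤ) : (n - 3) / 2 / 2 = (n - 3) / 4 :=
  Int.ediv_ediv_of_nonneg zero_le_two

lemma sub_three_ediv_two_and_four_of_emod_four (n : ℤ) :
    (n % 4 = 0 → (n - 3) / 2 = (n - 4) / 2 ∧ (n - 3) / 4 = (n - 4) / 4) ∧
    (n % 4 = 1 → (n - 3) / 2 = (n - 3) / 2 ∧ (n - 3) / 4 = (n - 5) / 4) ∧
    (n % 4 = 2 → (n - 3) / 2 = (n - 4) / 2 ∧ (n - 3) / 4 = (n - 6) / 4) ∧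
    (n % 4 = 3 → (n - 3) / 2 = (n - 3) / 2 ∧ (n - 3) / 4 = (n - 3) / 4) := by
  omega

theorem prop31_case_analysis_general (d : ℤ)
    (m : ℤ → ℤ → Finset (Fin 1) → ℤ)
    (h30 : 2 * m 3 0 ∅ ≤ m 4 0 ∅ ∧ m 4 0 ∅ ≤ 2 * m 3 0 ∅ + 1)
    (h41 : m 4 0 {0} = d - 3 - m 4 0 ∅)
    (h41' : m 2 0 {0} + m 4 0 ∅ ≤ m 4 0 {0} ∧
      m 4 0 {0} ≤ m 2 0 {0} + m 4 0 ∅ + 1) :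
    ((d - m 2 0 {0}) % 4 = 0 →
        m 4 0 ∅ = (d - m 2 0 {0} - 4) / 2 ∧ m 3 0 ∅ = (d - m 2 0 {0} - 4) / 4) ∧
    ((d - m 2 0 {0}) % 4 = 1 →
        m 4 0 ∅ = (d - m 2 0 {0} - 3) / 2 ∧ m 3 0 ∅ = (d - m 2 0 {0} - 5) / 4) ∧
    ((d - m 2 0 {0}) % 4 = 2 →
        m 4 0 ∅ = (d - m 2 0 {0} - 4) / 2 ∧ m 3 0 ∅ = (d - m 2 0 {0} - 6) / 4) ∧
    ((d - m 2 0 {0}) % 4 = 3 →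
        m 4 0 ∅ = (d - m 2 0 {0} - 3) / 2 ∧ m 3 0 ∅ = (d - m 2 0 {0} - 3) / 4) := by
  have hC : m 4 0 ∅ = (d - m 2 0 {0} - 3) / 2 :=
    eq_ediv_two_of_two_mul_le_of_le (by omega) (by omega)
  have hB : m 3 0 ∅ = (d - m 2 0 {0} - 3) / 4 := by
    rw [← sub_three_ediv_two_ediv_two, ← hC]
    exact eq_ediv_two_of_two_mul_le_of_le h30.1 h30.2
  rw [hC, hB]
  exact sub_three_ediv_two_and_four_of_emod_four _

/-- the case analysis in Proposition prop31 for type `(g,1)`: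
the pair `(C, B₀) = (m(4,0,∅), m(3,0,∅))` is determined by `d - A mod 4`,
where `A = m(2,0,{1})`. -/
theorem prop31_case_analysis (d g : ℤ) (hg : 2 ≤ g)
    (m : ℤ → ℤ → Finset (Fin 1) → ℤ)
    (hcompl : ∀ e h A, StabDom g 1 e h A →
      m e h A + m e (g + 1 - e - h) Aᶜ = d + 1 - e)
    (h30 : 2 * m 3 0 ∅ ≤ m 4 0 ∅ ∧ m 4 0 ∅ ≤ 2 * m 3 0 ∅ + 1)
    (h41 : m 4 0 {0} = d - 3 - m 4 0 ∅)
    (h41' : m 2 0 {0} + m 4 0 ∅ ≤ m 4 0 {0} ∧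
      m 4 0 {0} ≤ m 2 0 {0} + m 4 0 ∅ + 1) :
    ((d - m 2 0 {0}) % 4 = 0 →
        m 4 0 ∅ = (d - m 2 0 {0} - 4) / 2 ∧ m 3 0 ∅ = (d - m 2 0 {0} - 4) / 4) ∧
    ((d - m 2 0 {0}) % 4 = 1 →
        m 4 0 ∅ = (d - m 2 0 {0} - 3) / 2 ∧ m 3 0 ∅ = (d - m 2 0 {0} - 5) / 4) ∧
    ((d - m 2 0 {0}) % 4 = 2 →
        m 4 0 ∅ = (d - m 2 0 {0} - 4) / 2 ∧ m 3 0 ∅ = (d - m 2 0 {0} - 6) / 4) ∧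
    ((d - m 2 0 {0}) % 4 = 3 →
        m 4 0 ∅ = (d - m 2 0 {0} - 3) / 2 ∧ m 3 0 ∅ = (d - m 2 0 {0} - 3) / 4) :=
  prop31_case_analysis_general d m h30 h41 h41'
end
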